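/- Let H be a connected graph, uv an edge of H, and H(n1;n2) the graph obtained from H by attaching pendant paths of orders n1 at u and n2 at v. If 1 ≤ n1 ≤ n2 − 2 and u has a neighbour in H other than v (more precisely, u has degree at least 2 in H), then N(H(n1;n2)) < N(H(n1+1; n2−1)). -/
import Mathlib


open SimpleGraph

/-- Number of (nonempty) connected induced subgraphs of `G`. -/
noncomputable def numCIS {V : Type*} (G : SimpleGraph V) : ℕ :=
  Nat.card {s : Finset V // s.Nonempty ∧ (G.induce (↑s : Set V)).Connected}

/-- Number of connected induced subgraphs of `G` containing the vertex `v`. -/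
noncomputable def numCISat {V : Type*} (G : SimpleGraph V) (v : V) : ℕ :=
  Nat.card {s : Finset V // v ∈ s ∧ (G.induce (↑s : Set V)).Connected}

/-- Number of connected induced subgraphs of `G` containing both `u` and `v`. -/
noncomputable def numCISat2 {V : Type*} (G : SimpleGraph V) (u v : V) : ℕ :=
  Nat.card {s : Finset V // u ∈ s ∧ v ∈ s ∧ (G.induce (↑s : Set V)).Connected}

/-- Attach a pendant path with `k` new vertices at the vertex `u` of `G`
(so the resulting pendant path "of order `k + 1`" starts at `u`). -/
def attachPath {V : Type*} (G : SimpleGraph V) (u : V) (k : ℕ) :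
    SimpleGraph (V ⊕ Fin k) :=
  SimpleGraph.fromRel (fun a b =>
    (∃ x y, a = Sum.inl x ∧ b = Sum.inl y ∧ G.Adj x y) ∨
    (∃ i j : Fin k, a = Sum.inr i ∧ b = Sum.inr j ∧ (i : ℕ) + 1 = (j : ℕ)) ∨
    (∃ h : 0 < k, a = Sum.inl u ∧ b = Sum.inr ⟨0, h⟩))

open Sum Finset

section Adj
variable {V : Type*} {G : SimpleGraph V} {w : V} {k : ℕ}

lemma attachPath_adj_inl_inl {x y : V} :
    (attachPath G w k).Adj (Sum.inl x) (Sum.inl y) ↔ G.Adj x y := by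
  constructor
  · rintro ⟨hne, h | h⟩ <;>
      rcases h with ⟨x', y', hx, hy, h⟩ | ⟨i, j, hx, hy, h⟩ | ⟨h0, hx, hy⟩ <;>
      simp_all
    · exact h.symm
  · intro h
    exact ⟨by simpa using h.ne, Or.inl (Or.inl ⟨x, y, rfl, rfl, h⟩)⟩

lemma attachPath_adj_inr_inr {i j : Fin k} :
    (attachPath G w k).Adj (Sum.inr i) (Sum.inr j) ↔
      ((i : ℕ) + 1 = (j : ℕ) ∨ (j : ℕ) + 1 = (i : ℕ)) := by
  constructor
  · rintro ⟨hne, h | h⟩ <;>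
      rcases h with ⟨x', y', hx, hy, h⟩ | ⟨i', j', hx, hy, h⟩ | ⟨h0, hx, hy⟩ <;>
      simp_all
  · rintro (h | h)
    · exact ⟨by simp [Fin.ext_iff]; omega, Or.inl (Or.inr (Or.inl ⟨i, j, rfl, rfl, h⟩))⟩
    · exact ⟨by simp [Fin.ext_iff]; omega, Or.inr (Or.inr (Or.inl ⟨j, i, rfl, rfl, h⟩))⟩

lemma attachPath_adj_inl_inr {x : V} {i : Fin k} :
    (attachPath G w k).Adj (Sum.inl x) (Sum.inr i) ↔ (x = w ∧ (i : ℕ) = 0) := by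
  constructor
  · rintro ⟨hne, h | h⟩ <;>
      rcases h with ⟨x', y', hx, hy, h⟩ | ⟨i', j', hx, hy, h⟩ | ⟨h0, hx, hy⟩ <;>
      simp_all
  · rintro ⟨rfl, h0⟩
    have hk : 0 < k := i.pos
    refine ⟨by simp, Or.inl (Or.inr (Or.inr ⟨hk, rfl, ?_⟩))⟩
    congr 1
    exact Fin.ext h0.symm |>.symm

lemma attachPath_adj_inr_inl {x : V} {i : Fin k} :
    (attachPath G w k).Adj (Sum.inr i) (Sum.inl x) ↔ (x = w ∧ (i : ℕ) = 0) := by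
  rw [adj_comm]; exact attachPath_adj_inl_inr

/-- level function -/
def lvl : V ⊕ Fin k → ℕ := Sum.elim (fun _ => 0) (fun i => (i : ℕ) + 1)

@[simp] lemma lvl_inl {x : V} : lvl (Sum.inl x : V ⊕ Fin k) = 0 := rfl
@[simp] lemma lvl_inr {i : Fin k} : lvl (Sum.inr i : V ⊕ Fin k) = (i : ℕ) + 1 := rfl

lemma attachPath_adj_lvl {a b : V ⊕ Fin k} (h : (attachPath G w k).Adj a b) :
    lvl a ≤ lvl b + 1 ∧ lvl b ≤ lvl a + 1 := by
  cases a with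
  | inl x => cases b with
    | inl y => simp
    | inr j => rw [attachPath_adj_inl_inr] at h; simp [h.2]
  | inr i => cases b with
    | inl y => rw [attachPath_adj_inr_inl] at h; simp [h.2]
    | inr j => rw [attachPath_adj_inr_inr] at h; rcases h with h | h <;> simp only [lvl_inr] <;> omega

variable {S : Set (V ⊕ Fin k)}

/-- discrete intermediate value property along walks -/
lemma walk_ivt {a b : S} (p : ((attachPath G w k).induce S).Walk a b) :
    ∀ m : ℕ, lvl (a : V ⊕ Fin k) ≤ m → m ≤ lvl (b : V ⊕ Fin k) →
      ∃ c ∈ p.support, lvl (c : V ⊕ Fin k) = m := by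
  induction p with
  | nil => intro m h1 h2; exact ⟨_, by simp, le_antisymm h1 h2⟩
  | @cons a c b h q ih =>
    intro m h1 h2
    rcases eq_or_lt_of_le h1 with h1 | h1
    · exact ⟨a, by simp, h1⟩
    · have hadj : (attachPath G w k).Adj (a : V ⊕ Fin k) (c : V ⊕ Fin k) := h
      have hl := (attachPath_adj_lvl hadj).2
      obtain ⟨d, hd, hdm⟩ := ih m (by omega) h2
      exact ⟨d, by simp [hd], hdm⟩

/-- a walk from the path part to the base part passes through `w` -/
lemma walk_exit {a b : S} (p : ((attachPath G w k).induce S).Walk a b) :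
    ∀ (i : Fin k) (y : V), (a : V ⊕ Fin k) = Sum.inr i → (b : V ⊕ Fin k) = Sum.inl y →
      Sum.inl w ∈ S := by
  induction p with
  | nil => intro i y ha hb; rw [ha] at hb; simp at hb
  | @cons a c b h q ih =>
    intro i y ha hb
    cases hc : (c : V ⊕ Fin k) with
    | inl z =>
      have hadj : (attachPath G w k).Adj (a : V ⊕ Fin k) (c : V ⊕ Fin k) := h
      rw [ha, hc, attachPath_adj_inr_inl] at hadj
      rw [hadj.1] at hc
      exact hc ▸ c.2
    | inr i' => exact ih i' y hc hb

end Adj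

section Proj
variable {V : Type*} {G : SimpleGraph V} {w : V} {k : ℕ} {S : Set (V ⊕ Fin k)}

/-- projecting a walk to the base part -/
lemma walk_proj {a b : S} (p : ((attachPath G w k).induce S).Walk a b) :
    ∀ (y : V) (hy : y ∈ Sum.inl ⁻¹' S), (b : V ⊕ Fin k) = Sum.inl y →
      (∀ (x : V) (hx : x ∈ Sum.inl ⁻¹' S), (a : V ⊕ Fin k) = Sum.inl x →
        (G.induce (Sum.inl ⁻¹' S)).Reachable ⟨x, hx⟩ ⟨y, hy⟩) ∧
      (∀ (hw : w ∈ Sum.inl ⁻¹' S) (i : Fin k), (a : V ⊕ Fin k) = Sum.inr i →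
        (G.induce (Sum.inl ⁻¹' S)).Reachable ⟨w, hw⟩ ⟨y, hy⟩) := by
  induction p with
  | nil =>
    intro y hy hby
    constructor
    · intro x hx hax
      have : x = y := by rw [hax] at hby; exact Sum.inl_injective hby
      subst this
      rfl
    · intro hw i hai
      rw [hai] at hby; simp at hby
  | @cons a c b h q ih =>
    intro y hy hby
    have hadj : (attachPath G w k).Adj (a : V ⊕ Fin k) (c : V ⊕ Fin k) := h
    constructor
    · intro x hx hax
      cases hc : (c : V ⊕ Fin k) with
      | inl z =>
        have hz : z ∈ Sum.inl ⁻¹' S := by rw [Set.mem_preimage, ← hc]; exact c.2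
        have hxz : G.Adj x z := by
          rw [hax, hc, attachPath_adj_inl_inl] at hadj; exact hadj
        have hr := (ih y hy hby).1 z hz hc
        exact (SimpleGraph.Adj.reachable (by exact hxz :
          (G.induce (Sum.inl ⁻¹' S)).Adj ⟨x, hx⟩ ⟨z, hz⟩)).trans hr
      | inr i =>
        have hxw : x = w := by
          rw [hax, hc, attachPath_adj_inl_inr] at hadj; exact hadj.1
        subst hxw
        exact (ih y hy hby).2 hx i hc
    · intro hw i hai
      cases hc : (c : V ⊕ Fin k) with
      | inl z =>
        have hzw : z = w := by
          rw [hai, hc, attachPath_adj_inr_inl] at hadj; exact hadj.1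
        subst hzw
        have hz : z ∈ Sum.inl ⁻¹' S := by rw [Set.mem_preimage, ← hc]; exact c.2
        exact (ih y hy hby).1 z hz hc
      | inr i' => exact (ih y hy hby).2 hw i' hc

end Proj

section Classify
variable {V : Type*} {G : SimpleGraph V} {w : V} {k : ℕ}

/-- The embedding of the base part into the attached graph, as a hom of induced graphs. -/
def inlHom (G : SimpleGraph V) (w : V) (k : ℕ) (S : Set (V ⊕ Fin k)) :
    G.induce (Sum.inl ⁻¹' S) →g (attachPath G w k).induce S where
  toFun x := ⟨Sum.inl x.1, x.2⟩
  map_rel' := by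
    intro a b h
    exact attachPath_adj_inl_inl.mpr h

lemma conn_toLeft {s : Finset (V ⊕ Fin k)}
    (hconn : ((attachPath G w k).induce (↑s : Set (V ⊕ Fin k))).Connected)
    (hL : s.toLeft.Nonempty) :
    (G.induce (Sum.inl ⁻¹' (↑s : Set (V ⊕ Fin k)))).Connected := by
  obtain ⟨x0, hx0⟩ := hL
  have hx0' : x0 ∈ Sum.inl ⁻¹' (↑s : Set (V ⊕ Fin k)) := by
    simpa using Finset.mem_toLeft.mp hx0
  rw [SimpleGraph.connected_iff]
  refine ⟨?_, ⟨⟨x0, hx0'⟩⟩⟩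
  rintro ⟨x, hx⟩ ⟨y, hy⟩
  obtain ⟨p⟩ := hconn.preconnected ⟨Sum.inl x, hx⟩ ⟨Sum.inl y, hy⟩
  exact (walk_proj p y hy rfl).1 x hx rfl

lemma reach_inr_desc {s : Finset (V ⊕ Fin k)} :
    ∀ (d : ℕ) (m m' : Fin k), (m' : ℕ) + d = (m : ℕ) →
      (∀ l : Fin k, m' ≤ l → l ≤ m → Sum.inr l ∈ s) →
      ∀ (hm : (Sum.inr m : V ⊕ Fin k) ∈ (↑s : Set (V ⊕ Fin k)))
        (hm' : (Sum.inr m' : V ⊕ Fin k) ∈ (↑s : Set (V ⊕ Fin k))),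
      ((attachPath G w k).induce (↑s : Set (V ⊕ Fin k))).Reachable ⟨Sum.inr m, hm⟩
        ⟨Sum.inr m', hm'⟩ := by
  intro d
  induction d with
  | zero =>
    intro m m' hgap _ hm hm'
    have : m = m' := Fin.ext (by omega)
    subst this
    rfl
  | succ d ih =>
    intro m m' hgap hall hm hm'
    have hp : (m' : ℕ) + d < k := by omega
    set p : Fin k := ⟨(m' : ℕ) + d, hp⟩ with hpdef
    have hps : (Sum.inr p : V ⊕ Fin k) ∈ (↑s : Set (V ⊕ Fin k)) := by
      simpa using hall p (by simp [hpdef, Fin.le_def]) (by simp [hpdef, Fin.le_def]; omega)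
    have hadj : (attachPath G w k).Adj (Sum.inr m) (Sum.inr p) := by
      rw [attachPath_adj_inr_inr]; right; simp [hpdef]; omega
    have h1 : ((attachPath G w k).induce (↑s : Set (V ⊕ Fin k))).Adj ⟨Sum.inr m, hm⟩
        ⟨Sum.inr p, hps⟩ := hadj
    refine h1.reachable.trans (ih p m' (by simp [hpdef]) ?_ hps hm')
    intro l h1l h2l
    exact hall l h1l (h2l.trans (by simp [Fin.le_def, hpdef]; omega))
end Classify

section Master
variable {V : Type*} {G : SimpleGraph V} {w : V} {k : ℕ}

lemma classify (G : SimpleGraph V) (w : V) (k : ℕ) (s : Finset (V ⊕ Fin k)) :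
    (s.Nonempty ∧ ((attachPath G w k).induce (↑s : Set (V ⊕ Fin k))).Connected) ↔
      ((s.toRight = ∅ ∧ s.toLeft.Nonempty ∧
          (G.induce (Sum.inl ⁻¹' (↑s : Set (V ⊕ Fin k)))).Connected) ∨
       (s.toLeft = ∅ ∧ ∃ i j : Fin k, i ≤ j ∧ s.toRight = Finset.Icc i j) ∨
       (Sum.inl w ∈ s ∧ (G.induce (Sum.inl ⁻¹' (↑s : Set (V ⊕ Fin k)))).Connected ∧
          ∃ i : Fin k, s.toRight = Finset.Iic i)) := by
  constructor
  · rintro ⟨hne, hconn⟩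
    by_cases hR : s.toRight = ∅
    · left
      have hL : s.toLeft.Nonempty := by
        obtain ⟨a, ha⟩ := hne
        cases a with
        | inl x => exact ⟨x, Finset.mem_toLeft.mpr ha⟩
        | inr i =>
          exact absurd (Finset.mem_toRight.mpr ha) (by simp [hR])
      exact ⟨hR, hL, conn_toLeft hconn hL⟩
    · have hRne : s.toRight.Nonempty := Finset.nonempty_iff_ne_empty.mpr hR
      by_cases hL : s.toLeft = ∅
      · right; left
        refine ⟨hL, s.toRight.min' hRne, s.toRight.max' hRne,
          s.toRight.min'_le _ (s.toRight.max'_mem hRne), ?_⟩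
        ext m
        simp only [Finset.mem_Icc]
        constructor
        · intro hm
          exact ⟨s.toRight.min'_le _ hm, s.toRight.le_max' _ hm⟩
        · rintro ⟨h1, h2⟩
          have hi : (Sum.inr (s.toRight.min' hRne) : V ⊕ Fin k) ∈ (↑s : Set (V ⊕ Fin k)) := by
            simpa using Finset.mem_toRight.mp (s.toRight.min'_mem hRne)
          have hj : (Sum.inr (s.toRight.max' hRne) : V ⊕ Fin k) ∈ (↑s : Set (V ⊕ Fin k)) := by
            simpa using Finset.mem_toRight.mp (s.toRight.max'_mem hRne)
          obtain ⟨p⟩ := hconn.preconnected ⟨_, hi⟩ ⟨_, hj⟩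
          obtain ⟨c, _, hc⟩ := walk_ivt p ((m : ℕ) + 1)
            (by show lvl (Sum.inr (s.toRight.min' hRne) : V ⊕ Fin k) ≤ (m : ℕ) + 1
                rw [lvl_inr]; exact Nat.succ_le_succ (Fin.le_def.mp h1))
            (by show (m : ℕ) + 1 ≤ lvl (Sum.inr (s.toRight.max' hRne) : V ⊕ Fin k)
                rw [lvl_inr]; exact Nat.succ_le_succ (Fin.le_def.mp h2))
          rw [Finset.mem_toRight]
          cases hcv : (c : V ⊕ Fin k) with
          | inl z => rw [hcv] at hc; simp at hc
          | inr i' =>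
            rw [hcv] at hc
            simp only [lvl_inr] at hc
            have : i' = m := Fin.ext (by omega)
            rw [← this, ← hcv]
            exact c.2
      · right; right
        have hLne : s.toLeft.Nonempty := Finset.nonempty_iff_ne_empty.mpr hL
        obtain ⟨x0, hx0⟩ := hLne
        obtain ⟨i0, hi0⟩ := hRne
        have hx0s : (Sum.inl x0 : V ⊕ Fin k) ∈ (↑s : Set (V ⊕ Fin k)) := by
          simpa using Finset.mem_toLeft.mp hx0
        have hi0s : (Sum.inr i0 : V ⊕ Fin k) ∈ (↑s : Set (V ⊕ Fin k)) := by
          simpa using Finset.mem_toRight.mp hi0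
        obtain ⟨p⟩ := hconn.preconnected ⟨_, hi0s⟩ ⟨_, hx0s⟩
        have hws : (Sum.inl w : V ⊕ Fin k) ∈ (↑s : Set (V ⊕ Fin k)) := walk_exit p i0 x0 rfl rfl
        refine ⟨by simpa using hws, conn_toLeft hconn ⟨x0, hx0⟩, s.toRight.max' ⟨i0, hi0⟩, ?_⟩
        ext m
        simp only [Finset.mem_Iic]
        constructor
        · intro hm
          exact s.toRight.le_max' _ hm
        · intro h2
          have hj : (Sum.inr (s.toRight.max' ⟨i0, hi0⟩) : V ⊕ Fin k) ∈
              (↑s : Set (V ⊕ Fin k)) := by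
            simpa using Finset.mem_toRight.mp (s.toRight.max'_mem ⟨i0, hi0⟩)
          obtain ⟨q⟩ := hconn.preconnected ⟨_, hws⟩ ⟨_, hj⟩
          obtain ⟨c, _, hc⟩ := walk_ivt q ((m : ℕ) + 1)
            (by show lvl (Sum.inl w : V ⊕ Fin k) ≤ (m : ℕ) + 1; simp)
            (by show (m : ℕ) + 1 ≤ lvl (Sum.inr (s.toRight.max' ⟨i0, hi0⟩) : V ⊕ Fin k)
                rw [lvl_inr]; exact Nat.succ_le_succ (Fin.le_def.mp h2))
          rw [Finset.mem_toRight]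
          cases hcv : (c : V ⊕ Fin k) with
          | inl z => rw [hcv] at hc; simp at hc
          | inr i' =>
            rw [hcv] at hc
            simp only [lvl_inr] at hc
            have : i' = m := Fin.ext (by omega)
            rw [← this, ← hcv]
            exact c.2
  · rintro (⟨hR, ⟨x0, hx0⟩, hconn⟩ | ⟨hL, i, j, hij, hIcc⟩ | ⟨hws, hconn, i, hIic⟩)
    · have hx0s : (Sum.inl x0 : V ⊕ Fin k) ∈ (↑s : Set (V ⊕ Fin k)) := by
        simpa using Finset.mem_toLeft.mp hx0
      refine ⟨⟨_, Finset.mem_toLeft.mp hx0⟩, ?_⟩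
      rw [SimpleGraph.connected_iff]
      refine ⟨?_, ⟨⟨_, hx0s⟩⟩⟩
      rintro ⟨a, ha⟩ ⟨b, hb⟩
      cases a with
      | inr ia => exact absurd (Finset.mem_toRight.mpr (by simpa using ha)) (by simp [hR])
      | inl xa =>
        cases b with
        | inr ib => exact absurd (Finset.mem_toRight.mpr (by simpa using hb)) (by simp [hR])
        | inl xb =>
          have := (hconn.preconnected ⟨xa, ha⟩ ⟨xb, hb⟩).map (inlHom G w k _)
          exact this
    · have hik : (Sum.inr i : V ⊕ Fin k) ∈ (↑s : Set (V ⊕ Fin k)) := by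
        simpa using Finset.mem_toRight.mp (by rw [hIcc]; exact Finset.mem_Icc.mpr ⟨le_refl i, hij⟩)
      have hmem : ∀ m : Fin k, m ∈ s.toRight → i ≤ m ∧ m ≤ j := by
        intro m hm; rw [hIcc] at hm; exact Finset.mem_Icc.mp hm
      refine ⟨⟨_, by simpa using hik⟩, ?_⟩
      rw [SimpleGraph.connected_iff]
      refine ⟨?_, ⟨⟨_, hik⟩⟩⟩
      have key : ∀ (a : V ⊕ Fin k) (ha : a ∈ (↑s : Set (V ⊕ Fin k))),
          ((attachPath G w k).induce (↑s : Set (V ⊕ Fin k))).Reachable ⟨a, ha⟩ ⟨_, hik⟩ := by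
        intro a ha
        cases a with
        | inl xa => exact absurd (Finset.mem_toLeft.mpr (by simpa using ha)) (by simp [hL])
        | inr m =>
          obtain ⟨h1, h2⟩ := hmem m (Finset.mem_toRight.mpr (by simpa using ha))
          refine reach_inr_desc ((m : ℕ) - (i : ℕ)) m i (by have := Fin.le_def.mp h1; omega) ?_ ha hik
          intro l h1l h2l
          rw [← Finset.mem_toRight, hIcc]
          exact Finset.mem_Icc.mpr ⟨h1l, h2l.trans h2⟩
      intro a b
      exact (key a.1 a.2).trans (key b.1 b.2).symm
    · have hws' : (Sum.inl w : V ⊕ Fin k) ∈ (↑s : Set (V ⊕ Fin k)) := by simpa using hws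
      have hk : 0 < k := i.pos
      refine ⟨⟨_, hws⟩, ?_⟩
      rw [SimpleGraph.connected_iff]
      refine ⟨?_, ⟨⟨_, hws'⟩⟩⟩
      have h0r : (Sum.inr (⟨0, hk⟩ : Fin k) : V ⊕ Fin k) ∈ (↑s : Set (V ⊕ Fin k)) := by
        simpa using Finset.mem_toRight.mp (by rw [hIic]; exact Finset.mem_Iic.mpr (Fin.le_def.mpr (Nat.zero_le _)))
      have hadj0 : ((attachPath G w k).induce (↑s : Set (V ⊕ Fin k))).Adj ⟨_, h0r⟩ ⟨_, hws'⟩ := by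
        exact attachPath_adj_inr_inl.mpr ⟨rfl, rfl⟩
      have key : ∀ (a : V ⊕ Fin k) (ha : a ∈ (↑s : Set (V ⊕ Fin k))),
          ((attachPath G w k).induce (↑s : Set (V ⊕ Fin k))).Reachable ⟨a, ha⟩ ⟨_, hws'⟩ := by
        intro a ha
        cases a with
        | inl xa =>
          have hxa : xa ∈ Sum.inl ⁻¹' (↑s : Set (V ⊕ Fin k)) := ha
          exact (hconn.preconnected ⟨xa, hxa⟩ ⟨w, hws'⟩).map (inlHom G w k _)
        | inr m =>
          have hm : m ≤ i := by
            have := Finset.mem_toRight.mpr (by simpa using ha)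
            rw [hIic] at this; exact Finset.mem_Iic.mp this
          refine (reach_inr_desc (m : ℕ) m ⟨0, hk⟩ (by simp) ?_ ha h0r).trans hadj0.reachable
          intro l h1l h2l
          rw [← Finset.mem_toRight, hIic]
          exact Finset.mem_Iic.mpr (h2l.trans hm)
      intro a b
      exact (key a.1 a.2).trans (key b.1 b.2).symm

end Master

section Counting
open Finset

lemma card_subtype_or' {α : Type*} [Finite α] {p q : α → Prop} (h : ∀ x, p x → q x → False) :
    Nat.card {x // p x ∨ q x} = Nat.card {x // p x} + Nat.card {x // q x} := by
  classical
  rw [← Nat.card_sum]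
  exact Nat.card_congr (subtypeOrEquiv p q
    (Pi.disjoint_iff.mpr fun x => Prop.disjoint_iff.mpr fun hx => h x hx.1 hx.2))

variable {V : Type*} [Fintype V] {G : SimpleGraph V} {w : V} {k : ℕ}

lemma cardPure (G : SimpleGraph V) (w : V) (k : ℕ) (Q : Finset V → Prop) :
    Nat.card {s : Finset (V ⊕ Fin k) // (s.toRight = ∅ ∧ s.toLeft.Nonempty ∧
      (G.induce (Sum.inl ⁻¹' (↑s : Set (V ⊕ Fin k)))).Connected) ∧ Q s.toLeft}
    = Nat.card {t : Finset V // (t.Nonempty ∧ (G.induce (↑t : Set V)).Connected) ∧ Q t} := by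
  have hprop : ∀ t : Finset V, ((t.Nonempty ∧ (G.induce (↑t : Set V)).Connected) ∧ Q t) →
      (((t.disjSum (∅ : Finset (Fin k))).toRight = ∅ ∧
        (t.disjSum (∅ : Finset (Fin k))).toLeft.Nonempty ∧
        (G.induce (Sum.inl ⁻¹' (↑(t.disjSum (∅ : Finset (Fin k))) : Set (V ⊕ Fin k)))).Connected) ∧
        Q (t.disjSum (∅ : Finset (Fin k))).toLeft) := by
    intro t ht
    have hset : (Sum.inl ⁻¹' (↑(t.disjSum (∅ : Finset (Fin k))) : Set (V ⊕ Fin k))) =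
        (↑t : Set V) := by ext x; simp
    refine ⟨⟨Finset.toRight_disjSum, by rw [Finset.toLeft_disjSum]; exact ht.1.1, by rw [hset]; exact ht.1.2⟩, by rw [Finset.toLeft_disjSum]; exact ht.2⟩
  refine (Nat.card_eq_of_bijective (fun t => ⟨t.1.disjSum ∅, hprop t.1 t.2⟩) ⟨?_, ?_⟩).symm
  · intro t₁ t₂ h
    have h2 := congrArg (fun z => (Subtype.val z).toLeft) h
    simp only [Finset.toLeft_disjSum] at h2
    exact Subtype.ext h2
  · rintro ⟨s, ⟨hR, hNe, hC⟩, hQ⟩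
    have hset : (↑s.toLeft : Set V) = (Sum.inl ⁻¹' (↑s : Set (V ⊕ Fin k))) := by ext x; simp
    refine ⟨⟨s.toLeft, ⟨hNe, by rw [hset]; exact hC⟩, hQ⟩, ?_⟩
    exact Subtype.ext (Finset.eq_disjSum_iff.mpr ⟨rfl, hR⟩).symm

lemma cardMix (G : SimpleGraph V) (w : V) (k : ℕ) (Q : Finset V → Prop) :
    Nat.card {s : Finset (V ⊕ Fin k) // (Sum.inl w ∈ s ∧
      (G.induce (Sum.inl ⁻¹' (↑s : Set (V ⊕ Fin k)))).Connected ∧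
      (∃ i : Fin k, s.toRight = Finset.Iic i)) ∧ Q s.toLeft}
    = k * Nat.card {t : Finset V // (w ∈ t ∧ (G.induce (↑t : Set V)).Connected) ∧ Q t} := by
  have hk : k * Nat.card {t : Finset V // (w ∈ t ∧ (G.induce (↑t : Set V)).Connected) ∧ Q t}
      = Nat.card (Fin k × {t : Finset V // (w ∈ t ∧ (G.induce (↑t : Set V)).Connected) ∧ Q t}) := by
    rw [Nat.card_prod, Nat.card_eq_fintype_card (α := Fin k), Fintype.card_fin]
  rw [hk]
  have hprop : ∀ (i : Fin k) (t : Finset V),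
      ((w ∈ t ∧ (G.induce (↑t : Set V)).Connected) ∧ Q t) →
      ((Sum.inl w ∈ t.disjSum (Finset.Iic i) ∧
        (G.induce (Sum.inl ⁻¹' (↑(t.disjSum (Finset.Iic i)) : Set (V ⊕ Fin k)))).Connected ∧
        (∃ i' : Fin k, (t.disjSum (Finset.Iic i)).toRight = Finset.Iic i')) ∧
        Q (t.disjSum (Finset.Iic i)).toLeft) := by
    intro i t ht
    have hset : (Sum.inl ⁻¹' (↑(t.disjSum (Finset.Iic i)) : Set (V ⊕ Fin k))) =
        (↑t : Set V) := by ext x; simp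
    exact ⟨⟨Finset.inl_mem_disjSum.mpr ht.1.1, by rw [hset]; exact ht.1.2,
      ⟨i, Finset.toRight_disjSum⟩⟩, by rw [Finset.toLeft_disjSum]; exact ht.2⟩
  refine (Nat.card_eq_of_bijective
    (fun p => ⟨p.2.1.disjSum (Finset.Iic p.1), hprop p.1 p.2.1 p.2.2⟩) ⟨?_, ?_⟩).symm
  · rintro ⟨i₁, t₁⟩ ⟨i₂, t₂⟩ h
    have h' := congrArg Subtype.val h
    simp only [Finset.disjSum_inj] at h'
    obtain ⟨h1, h2⟩ := h'
    have : i₁ = i₂ := by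
      have hm : i₁ ∈ Finset.Iic i₂ := h2 ▸ Finset.mem_Iic.mpr (le_refl i₁)
      have hm' : i₂ ∈ Finset.Iic i₁ := h2.symm ▸ Finset.mem_Iic.mpr (le_refl i₂)
      exact le_antisymm (Finset.mem_Iic.mp hm) (Finset.mem_Iic.mp hm')
    subst this
    rw [Prod.ext_iff]
    exact ⟨rfl, Subtype.ext h1⟩
  · rintro ⟨s, ⟨hw, hC, i, hIic⟩, hQ⟩
    have hset : (↑s.toLeft : Set V) = (Sum.inl ⁻¹' (↑s : Set (V ⊕ Fin k))) := by ext x; simp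
    refine ⟨⟨i, ⟨s.toLeft, ⟨Finset.mem_toLeft.mpr hw, by rw [hset]; exact hC⟩, hQ⟩⟩, ?_⟩
    exact Subtype.ext (Finset.eq_disjSum_iff.mpr ⟨rfl, hIic⟩).symm

lemma cardPath (G : SimpleGraph V) (w : V) (k : ℕ) :
    Nat.card {s : Finset (V ⊕ Fin k) //
      s.toLeft = ∅ ∧ ∃ i j : Fin k, i ≤ j ∧ s.toRight = Finset.Icc i j}
    = k * (k + 1) / 2 := by
  have hprop : ∀ p : {p : Fin k × Fin k // p.1 ≤ p.2},
      ((∅ : Finset V).disjSum (Finset.Icc p.1.1 p.1.2)).toLeft = ∅ ∧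
      ∃ i j : Fin k, i ≤ j ∧
        ((∅ : Finset V).disjSum (Finset.Icc p.1.1 p.1.2)).toRight = Finset.Icc i j := by
    intro p
    exact ⟨Finset.toLeft_disjSum, p.1.1, p.1.2, p.2, Finset.toRight_disjSum⟩
  have h1 : Nat.card {p : Fin k × Fin k // p.1 ≤ p.2} =
      Nat.card {s : Finset (V ⊕ Fin k) //
        s.toLeft = ∅ ∧ ∃ i j : Fin k, i ≤ j ∧ s.toRight = Finset.Icc i j} := by
    refine Nat.card_eq_of_bijective (fun p => ⟨_, hprop p⟩) ⟨?_, ?_⟩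
    · rintro ⟨⟨i₁, j₁⟩, hp₁⟩ ⟨⟨i₂, j₂⟩, hp₂⟩ h
      have h' := congrArg Subtype.val h
      simp only [Finset.disjSum_inj] at h'
      have h2 := h'.2
      have hi : i₁ = i₂ := by
        have hm : i₁ ∈ Finset.Icc i₂ j₂ := h2 ▸ Finset.mem_Icc.mpr ⟨le_refl i₁, hp₁⟩
        have hm' : i₂ ∈ Finset.Icc i₁ j₁ := h2.symm ▸ Finset.mem_Icc.mpr ⟨le_refl i₂, hp₂⟩
        exact le_antisymm (Finset.mem_Icc.mp hm').1 (Finset.mem_Icc.mp hm).1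
      have hj : j₁ = j₂ := by
        have hm : j₁ ∈ Finset.Icc i₂ j₂ := h2 ▸ Finset.mem_Icc.mpr ⟨hp₁, le_refl j₁⟩
        have hm' : j₂ ∈ Finset.Icc i₁ j₁ := h2.symm ▸ Finset.mem_Icc.mpr ⟨hp₂, le_refl j₂⟩
        exact le_antisymm (Finset.mem_Icc.mp hm).2 (Finset.mem_Icc.mp hm').2
      subst hi; subst hj
      rfl
    · rintro ⟨s, hL, i, j, hij, hIcc⟩
      refine ⟨⟨⟨i, j⟩, hij⟩, Subtype.ext (Finset.eq_disjSum_iff.mpr ⟨hL, hIcc⟩).symm⟩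
  rw [← h1, Nat.card_congr Sym2.sortEquiv.symm, Nat.card_eq_fintype_card, Sym2.card,
    Fintype.card_fin, Nat.choose_two_right]
  simp [Nat.mul_comm]

end Counting

section Formulas

lemma card_and_true {α : Type*} (p : α → Prop) :
    Nat.card {x // p x ∧ True} = Nat.card {x // p x} :=
  Nat.card_congr (Equiv.subtypeEquivRight (fun x => and_iff_left trivial))

variable {V : Type*} [Fintype V]

lemma disj_pure {G : SimpleGraph V} {w : V} {k : ℕ} (s : Finset (V ⊕ Fin k)) :
    (s.toRight = ∅ ∧ s.toLeft.Nonempty ∧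
      (G.induce (Sum.inl ⁻¹' (↑s : Set (V ⊕ Fin k)))).Connected) →
    ((s.toLeft = ∅ ∧ ∃ i j : Fin k, i ≤ j ∧ s.toRight = Finset.Icc i j) ∨
     (Sum.inl w ∈ s ∧ (G.induce (Sum.inl ⁻¹' (↑s : Set (V ⊕ Fin k)))).Connected ∧
        ∃ i : Fin k, s.toRight = Finset.Iic i)) → False := by
  rintro ⟨hR, hL, -⟩ (⟨hL', -⟩ | ⟨-, -, i, hIic⟩)
  · rw [hL'] at hL; exact Finset.not_nonempty_empty hL
  · have : i ∈ s.toRight := hIic ▸ Finset.mem_Iic.mpr (le_refl i)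
    rw [hR] at this; exact Finset.notMem_empty i this

lemma disj_path {G : SimpleGraph V} {w : V} {k : ℕ} (s : Finset (V ⊕ Fin k)) :
    (s.toLeft = ∅ ∧ ∃ i j : Fin k, i ≤ j ∧ s.toRight = Finset.Icc i j) →
    (Sum.inl w ∈ s ∧ (G.induce (Sum.inl ⁻¹' (↑s : Set (V ⊕ Fin k)))).Connected ∧
        ∃ i : Fin k, s.toRight = Finset.Iic i) → False := by
  rintro ⟨hL, -⟩ ⟨hw, -, -⟩
  have : w ∈ s.toLeft := Finset.mem_toLeft.mpr hw
  rw [hL] at this; exact Finset.notMem_empty w this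

lemma numCIS_attach (G : SimpleGraph V) (w : V) (k : ℕ) :
    numCIS (attachPath G w k) = numCIS G + k * (k + 1) / 2 + k * numCISat G w := by
  classical
  unfold numCIS numCISat
  rw [Nat.card_congr (Equiv.subtypeEquivRight (fun s => classify G w k s))]
  rw [card_subtype_or' (disj_pure (w := w)), card_subtype_or' (disj_path (w := w))]
  have e1 : Nat.card {s : Finset (V ⊕ Fin k) // s.toRight = ∅ ∧ s.toLeft.Nonempty ∧
      (G.induce (Sum.inl ⁻¹' (↑s : Set (V ⊕ Fin k)))).Connected}
      = Nat.card {t : Finset V // t.Nonempty ∧ (G.induce (↑t : Set V)).Connected} :=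
    (card_and_true _).symm.trans
      ((cardPure G w k (fun _ => True)).trans (card_and_true _))
  have e3 : Nat.card {s : Finset (V ⊕ Fin k) // Sum.inl w ∈ s ∧
      (G.induce (Sum.inl ⁻¹' (↑s : Set (V ⊕ Fin k)))).Connected ∧
      ∃ i : Fin k, s.toRight = Finset.Iic i}
      = k * Nat.card {t : Finset V // w ∈ t ∧ (G.induce (↑t : Set V)).Connected} :=
    (card_and_true _).symm.trans
      ((cardMix G w k (fun _ => True)).trans (congrArg (k * ·) (card_and_true _)))
  rw [e1, e3, cardPath G w k]
  omega

lemma numCISat_attach (G : SimpleGraph V) (w : V) (k : ℕ) (x : V) :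
    numCISat (attachPath G w k) (Sum.inl x) = numCISat G x + k * numCISat2 G w x := by
  classical
  have hcl : ∀ s : Finset (V ⊕ Fin k),
      (Sum.inl x ∈ s ∧ ((attachPath G w k).induce (↑s : Set (V ⊕ Fin k))).Connected) ↔
      (((s.toRight = ∅ ∧ s.toLeft.Nonempty ∧
          (G.induce (Sum.inl ⁻¹' (↑s : Set (V ⊕ Fin k)))).Connected) ∧ x ∈ s.toLeft) ∨
       ((Sum.inl w ∈ s ∧ (G.induce (Sum.inl ⁻¹' (↑s : Set (V ⊕ Fin k)))).Connected ∧
          ∃ i : Fin k, s.toRight = Finset.Iic i) ∧ x ∈ s.toLeft)) := by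
    intro s
    constructor
    · rintro ⟨hx, hconn⟩
      have hxL : x ∈ s.toLeft := Finset.mem_toLeft.mpr hx
      rcases (classify G w k s).mp ⟨⟨_, hx⟩, hconn⟩ with h | h | h
      · exact Or.inl ⟨h, hxL⟩
      · rw [h.1] at hxL; exact absurd hxL (Finset.notMem_empty x)
      · exact Or.inr ⟨h, hxL⟩
    · rintro (⟨h, hxL⟩ | ⟨h, hxL⟩)
      · exact ⟨Finset.mem_toLeft.mp hxL, ((classify G w k s).mpr (Or.inl h)).2⟩
      · exact ⟨Finset.mem_toLeft.mp hxL, ((classify G w k s).mpr (Or.inr (Or.inr h))).2⟩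
  unfold numCISat numCISat2
  rw [Nat.card_congr (Equiv.subtypeEquivRight hcl)]
  rw [card_subtype_or' (fun s h1 h2 => disj_pure (w := w) s h1.1 (Or.inr h2.1))]
  congr 1
  · rw [cardPure G w k (fun t => x ∈ t)]
    refine Nat.card_congr (Equiv.subtypeEquivRight (fun t => ?_))
    constructor
    · rintro ⟨⟨-, hc⟩, hx⟩; exact ⟨hx, hc⟩
    · rintro ⟨hx, hc⟩; exact ⟨⟨⟨x, hx⟩, hc⟩, hx⟩
  · rw [cardMix G w k (fun t => x ∈ t)]
    congr 1
    refine Nat.card_congr (Equiv.subtypeEquivRight (fun t => ?_))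
    constructor
    · rintro ⟨⟨hw', hc⟩, hx⟩; exact ⟨hw', hx, hc⟩
    · rintro ⟨hw', hx, hc⟩; exact ⟨⟨hw', hc⟩, hx⟩

end Formulas

section Base
variable {V : Type*} [Fintype V] {G : SimpleGraph V}

lemma conn_star {s : Finset V} {z : V} (hz : z ∈ s)
    (h : ∀ y ∈ s, y = z ∨ G.Adj z y) : (G.induce (↑s : Set V)).Connected := by
  have hz' : z ∈ (↑s : Set V) := hz
  rw [SimpleGraph.connected_iff]
  refine ⟨?_, ⟨⟨z, hz'⟩⟩⟩
  have key : ∀ (a : V) (ha : a ∈ (↑s : Set V)),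
      (G.induce (↑s : Set V)).Reachable ⟨a, ha⟩ ⟨z, hz'⟩ := by
    intro a ha
    rcases h a ha with rfl | hadj
    · rfl
    · exact (SimpleGraph.Adj.reachable (by exact hadj.symm :
        (G.induce (↑s : Set V)).Adj ⟨a, ha⟩ ⟨z, hz'⟩))
  intro a b
  exact (key a.1 a.2).trans (key b.1 b.2).symm

lemma conn_insert [DecidableEq V] {s : Finset V} {u v : V} (huv : G.Adj u v) (hv : v ∈ s)
    (hconn : (G.induce (↑s : Set V)).Connected) :
    (G.induce (↑(insert u s) : Set V)).Connected := by
  have hsub : (↑s : Set V) ≤ (↑(insert u s) : Set V) :=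
    Finset.coe_subset.mpr (Finset.subset_insert u s)
  have hv' : v ∈ (↑(insert u s) : Set V) := hsub hv
  rw [SimpleGraph.connected_iff]
  refine ⟨?_, ⟨⟨v, hv'⟩⟩⟩
  have key : ∀ (a : V) (ha : a ∈ (↑(insert u s) : Set V)),
      (G.induce (↑(insert u s) : Set V)).Reachable ⟨a, ha⟩ ⟨v, hv'⟩ := by
    intro a ha
    rcases Finset.mem_insert.mp (by exact_mod_cast ha) with rfl | has
    · refine SimpleGraph.Adj.reachable ?_
      exact huv
    · exact (hconn.preconnected ⟨a, has⟩ ⟨v, hv⟩).map (G.induceHomOfLE hsub).toHom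
  intro a b
  exact (key a.1 a.2).trans (key b.1 b.2).symm

/-- split a "contains u" count by membership of v -/
lemma numCISat_split (G : SimpleGraph V) (u v : V) (huv : u ≠ v) :
    numCISat G u = numCISat2 G u v +
      Nat.card {s : Finset V // (u ∈ s ∧ v ∉ s) ∧ (G.induce (↑s : Set V)).Connected} := by
  classical
  unfold numCISat numCISat2
  have h0 : Nat.card {s : Finset V // u ∈ s ∧ (G.induce (↑s : Set V)).Connected} =
      Nat.card {s : Finset V // (u ∈ s ∧ v ∈ s ∧ (G.induce (↑s : Set V)).Connected) ∨
        ((u ∈ s ∧ v ∉ s) ∧ (G.induce (↑s : Set V)).Connected)} :=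
    Nat.card_congr (Equiv.subtypeEquivRight (fun s => by tauto))
  rw [h0]
  exact card_subtype_or' (fun s h1 h2 => h2.1.2 h1.2.1)

lemma card_B_le_C [DecidableEq V] (G : SimpleGraph V) (u v : V) (huv : G.Adj u v) :
    Nat.card {s : Finset V // (v ∈ s ∧ u ∉ s) ∧ (G.induce (↑s : Set V)).Connected}
      ≤ numCISat2 G u v := by
  unfold numCISat2
  refine Nat.card_le_card_of_injective
    (fun s => ⟨insert u s.1, Finset.mem_insert_self u s.1,
      Finset.mem_insert_of_mem s.2.1.1, conn_insert huv s.2.1.1 s.2.2⟩) ?_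
  rintro ⟨s₁, ⟨hv₁, hu₁⟩, hc₁⟩ ⟨s₂, ⟨hv₂, hu₂⟩, hc₂⟩ h
  have h' := congrArg Subtype.val h
  simp only at h'
  refine Subtype.ext ?_
  have := congrArg (Finset.erase · u) h'
  simpa [Finset.erase_insert hu₁, Finset.erase_insert hu₂] using this

lemma card_A_ge_two [DecidableEq V] (G : SimpleGraph V) (u v : V) (huv : G.Adj u v)
    (hdeg : (G.neighborSet u).Nontrivial) :
    2 ≤ Nat.card {s : Finset V // (u ∈ s ∧ v ∉ s) ∧ (G.induce (↑s : Set V)).Connected} := by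
  obtain ⟨x, hx, y, hy, hxy⟩ := hdeg
  obtain ⟨z, hz, hzv⟩ : ∃ z, G.Adj u z ∧ z ≠ v := by
    by_cases hxv : x = v
    · exact ⟨y, hy, fun h => hxy (by rw [hxv, h])⟩
    · exact ⟨x, hx, hxv⟩
  have huv' : u ≠ v := huv.ne
  have huz : u ≠ z := G.ne_of_adj hz
  have hs1 : (u ∈ ({u} : Finset V) ∧ v ∉ ({u} : Finset V)) ∧
      (G.induce (↑({u} : Finset V) : Set V)).Connected := by
    refine ⟨⟨Finset.mem_singleton_self u, ?_⟩, ?_⟩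
    · intro hv; exact huv' (Finset.mem_singleton.mp hv).symm
    · exact conn_star (Finset.mem_singleton_self u) (fun y hy => Or.inl (Finset.mem_singleton.mp hy))
  have hs2 : (u ∈ ({u, z} : Finset V) ∧ v ∉ ({u, z} : Finset V)) ∧
      (G.induce (↑({u, z} : Finset V) : Set V)).Connected := by
    refine ⟨⟨Finset.mem_insert_self u _, ?_⟩, ?_⟩
    · intro hv
      rcases Finset.mem_insert.mp hv with h | h
      · exact huv' h.symm
      · exact hzv (Finset.mem_singleton.mp h).symm
    · refine conn_star (Finset.mem_insert_self u _) (fun y hy => ?_)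
      rcases Finset.mem_insert.mp hy with h | h
      · exact Or.inl h
      · exact Or.inr ((Finset.mem_singleton.mp h) ▸ hz)
  have hne : ({u} : Finset V) ≠ ({u, z} : Finset V) := by
    intro h
    have hzmem : z ∈ ({u} : Finset V) := h.symm ▸ Finset.mem_insert_of_mem (Finset.mem_singleton_self z)
    exact huz (Finset.mem_singleton.mp hzmem).symm
  have : Nontrivial {s : Finset V // (u ∈ s ∧ v ∉ s) ∧ (G.induce (↑s : Set V)).Connected} :=
    ⟨⟨⟨{u}, hs1⟩, ⟨{u, z}, hs2⟩, fun h => hne (congrArg Subtype.val h)⟩⟩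
  exact Finite.one_lt_card_iff_nontrivial.mpr this

lemma numCISat2_pos (G : SimpleGraph V) (u v : V) (huv : G.Adj u v) :
    1 ≤ numCISat2 G u v := by
  classical
  have hs : (u ∈ ({u, v} : Finset V) ∧ v ∈ ({u, v} : Finset V)) ∧
      (G.induce (↑({u, v} : Finset V) : Set V)).Connected := by
    refine ⟨⟨Finset.mem_insert_self u _, Finset.mem_insert_of_mem (Finset.mem_singleton_self v)⟩, ?_⟩
    refine conn_star (Finset.mem_insert_self u _) (fun y hy => ?_)
    rcases Finset.mem_insert.mp hy with h | h
    · exact Or.inl h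
    · exact Or.inr ((Finset.mem_singleton.mp h) ▸ huv)
  have : Nonempty {s : Finset V // u ∈ s ∧ v ∈ s ∧ (G.induce (↑s : Set V)).Connected} :=
    ⟨⟨{u, v}, hs.1.1, hs.1.2, hs.2⟩⟩
  exact Nat.card_pos
end Base

lemma tri_succ (k : ℕ) : (k + 1) * (k + 1 + 1) / 2 = k * (k + 1) / 2 + (k + 1) := by
  have h : (k + 1) * (k + 1 + 1) = k * (k + 1) + 2 * (k + 1) := by ring
  rw [h, Nat.add_mul_div_left _ _ (by norm_num : 0 < 2)]


/-- If `1 ≤ n1 ≤ n2 - 2` and `u` has degree at least 2 in `H` (a neighbour other than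
`v`), then `N(H(n1; n2)) < N(H(n1+1; n2-1))`, where `H(n1; n2)` attaches pendant paths
of orders `n1` at `u` and `n2` at `v` (orders counting the attachment vertex). -/
theorem numCIS_H_balance {V : Type*} [Fintype V] (H : SimpleGraph V) (hH : H.Connected)
    (u v : V) (huv : H.Adj u v) (hdeg : (H.neighborSet u).Nontrivial)
    (n1 n2 : ℕ) (h1 : 1 ≤ n1) (h12 : n1 + 2 ≤ n2) :
    numCIS (attachPath (attachPath H u (n1 - 1)) (Sum.inl v) (n2 - 1)) <
      numCIS (attachPath (attachPath H u n1) (Sum.inl v) (n2 - 2)) := by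
  classical
  obtain ⟨a, rfl⟩ : ∃ a, n1 = a + 1 := ⟨n1 - 1, by omega⟩
  obtain ⟨d, rfl⟩ : ∃ d, n2 = a + d + 3 := ⟨n2 - a - 3, by omega⟩
  show numCIS (attachPath (attachPath H u a) (Sum.inl v) (a + d + 2)) <
    numCIS (attachPath (attachPath H u (a + 1)) (Sum.inl v) (a + d + 1))
  rw [numCIS_attach (attachPath H u a) (Sum.inl v) (a + d + 2),
    numCIS_attach (attachPath H u (a + 1)) (Sum.inl v) (a + d + 1),
    numCIS_attach H u a, numCIS_attach H u (a + 1),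
    numCISat_attach H u a v, numCISat_attach H u (a + 1) v]
  set N := numCIS H
  set Nu := numCISat H u
  set Nv := numCISat H v
  set Nc := numCISat2 H u v
  set A := Nat.card {s : Finset V // (u ∈ s ∧ v ∉ s) ∧ (H.induce (↑s : Set V)).Connected} with hA
  set B := Nat.card {s : Finset V // (v ∈ s ∧ u ∉ s) ∧ (H.induce (↑s : Set V)).Connected} with hB
  have hNu : Nu = Nc + A := numCISat_split H u v huv.ne
  have hsym : numCISat2 H v u = Nc := Nat.card_congr (Equiv.subtypeEquivRight (fun s => by tauto))
  have hNv : Nv = Nc + B := by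
    have := numCISat_split H v u huv.ne.symm
    rwa [hsym] at this
  have hBC : B ≤ Nc := card_B_le_C H u v huv
  have hA2 : 2 ≤ A := card_A_ge_two H u v huv hdeg
  have hNc : 1 ≤ Nc := numCISat2_pos H u v huv
  have key : Nv + 2 ≤ Nu + Nc := by omega
  have ht1 : (a + 1) * (a + 1 + 1) / 2 = a * (a + 1) / 2 + (a + 1) := tri_succ a
  have ht2 : (a + d + 2) * (a + d + 2 + 1) / 2
      = (a + d + 1) * (a + d + 1 + 1) / 2 + (a + d + 2) := tri_succ (a + d + 1)
  rw [ht1, ht2]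
  have hdNc : d * 1 ≤ d * Nc := Nat.mul_le_mul_left d hNc
  nlinarith [key, hNc, hdNc]
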